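/- Let Y be a strong Choquet topological space and let X ⊆ Y be a Gδ-dense subset of Y. Then X, with the subspace topology, is a strong Choquet space. -/

import Mathlib

open Set

variable {X : Type*}

/-- Positions in the strong Choquet game on `X` consistent with the strategy `σ` of player `N`:
a position is the list of player `E`'s moves so far (an open set together with a chosen point
of it), most recent first; each move of `E` after the first must moreover be contained in `N`'s
answer `σ l` to the previous position `l`. -/
inductive StrongChoquetPos [TopologicalSpace X] (σ : List (Set X × X) → Set X) :
    List (Set X × X) → Prop
  | single (U : Set X) (x : X) : IsOpen U → x ∈ U → StrongChoquetPos σ [(U, x)]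
  | cons (U : Set X) (x : X) (l : List (Set X × X)) : StrongChoquetPos σ l → IsOpen U →
      x ∈ U → U ⊆ σ l → StrongChoquetPos σ ((U, x) :: l)

/-- The list of the first `n+1` moves of player `E` in a run `e` of the strong Choquet game,
most recent first. -/
def strongChoquetHist (e : ℕ → Set X × X) : ℕ → List (Set X × X)
  | 0 => [e 0]
  | n + 1 => e (n + 1) :: strongChoquetHist e n

/-- `σ` is a winning strategy for player `N` in the strong Choquet game on `X`: at every
position reachable against `σ`, the answer `σ l` is a legal move (an open set `U'` with
`x ∈ U' ⊆ U` where `(U, x)` is `E`'s last move), and for every infinite run in which `E`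
plays legally and `N` follows `σ`, the intersection of all moves played is nonempty. -/
def IsWinningStrongChoquetStrategy [TopologicalSpace X] (σ : List (Set X × X) → Set X) : Prop :=
  (∀ l, StrongChoquetPos σ l → IsOpen (σ l) ∧ ∀ p ∈ l.head?, p.2 ∈ σ l ∧ σ l ⊆ p.1) ∧
  (∀ e : ℕ → Set X × X, (∀ n, StrongChoquetPos σ (strongChoquetHist e n)) →
    (⋂ n, (e n).1).Nonempty)

/-- A topological space is strong Choquet if player `N` has a winning strategy in the strong
Choquet game. -/
def IsStrongChoquet (X : Type*) [TopologicalSpace X] : Prop :=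
  ∃ σ : List (Set X × X) → Set X, IsWinningStrongChoquetStrategy σ

/-- A subset `A` of a topological space is `Gδ`-dense if it has nonempty intersection with
every nonempty `Gδ`-subset. -/
def IsGδDense {Y : Type*} [TopologicalSpace Y] (A : Set Y) : Prop :=
  ∀ G : Set Y, IsGδ G → G.Nonempty → (A ∩ G).Nonempty

/-!
Player `N` in the game on `X` simulates a winning strategy `σ` for `Y`. Each move `(V, x)` of `E`
in `X` is lifted to the move `(Ṽ ∩ σ(previous lifted position), x)` in `Y`, where `Ṽ` is the
largest open subset of `Y` whose trace on `X` lies in `V`, and `N` answers with the trace on `X`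
of `σ`'s reply. The lifted run is a legal run against `σ`, so its intersection is a nonempty `Gδ`
subset of `Y`; by `Gδ`-density it meets `X`, and a point of `X` in it lies in every move `V`.
-/

section Subspace

variable {Y : Type*} [TopologicalSpace Y]

def maxOpenExtension (X : Set Y) (V : Set X) : Set Y :=
  interior (Subtype.val '' V ∪ Xᶜ)

lemma isOpen_maxOpenExtension (X : Set Y) (V : Set X) : IsOpen (maxOpenExtension X V) :=
  isOpen_interior

lemma mem_maxOpenExtension {X : Set Y} {V : Set X} (hV : IsOpen V) {x : X} (hx : x ∈ V) :
    (x : Y) ∈ maxOpenExtension X V := by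
  obtain ⟨O, hO, rfl⟩ := isOpen_induced_iff.mp hV
  refine interior_maximal (fun y hy => ?_) hO hx
  by_cases hyX : y ∈ X
  · exact Or.inl ⟨⟨y, hyX⟩, hy, rfl⟩
  · exact Or.inr hyX

lemma preimage_val_maxOpenExtension_subset (X : Set Y) (V : Set X) :
    Subtype.val ⁻¹' maxOpenExtension X V ⊆ V := by
  intro z hz
  rcases interior_subset hz with ⟨w, hw, hwz⟩ | hzX
  · rwa [← Subtype.ext hwz]
  · exact absurd z.2 hzX

end Subspace

section Game

variable {Y : Type*} [TopologicalSpace Y]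

def IsLegalStrongChoquetStrategy (σ : List (Set Y × Y) → Set Y) : Prop :=
  ∀ l, StrongChoquetPos σ l → IsOpen (σ l) ∧ ∀ p ∈ l.head?, p.2 ∈ σ l ∧ σ l ⊆ p.1

lemma StrongChoquetPos.isOpen_fst_of_cons {σ : List (Set Y × Y) → Set Y} {p : Set Y × Y}
    {l : List (Set Y × Y)} (h : StrongChoquetPos σ (p :: l)) : IsOpen p.1 := by
  cases h <;> assumption

lemma isOpen_fst_of_forall_strongChoquetPos {σ : List (Set Y × Y) → Set Y} {e : ℕ → Set Y × Y}
    (he : ∀ n, StrongChoquetPos σ (strongChoquetHist e n)) (n : ℕ) : IsOpen (e n).1 := by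
  have hn := he n
  cases n <;> exact hn.isOpen_fst_of_cons

variable (σ : List (Set Y × Y) → Set Y) (X : Set Y)

def liftMove (p : Set X × X) : List (Set Y × Y) → Set Y × Y
  | [] => (maxOpenExtension X p.1, p.2)
  | l => (maxOpenExtension X p.1 ∩ σ l, p.2)

def liftPos : List (Set X × X) → List (Set Y × Y)
  | [] => []
  | p :: l => liftMove σ X p (liftPos l) :: liftPos l

def subtypeStrategy (l : List (Set X × X)) : Set X :=
  Subtype.val ⁻¹' σ (liftPos σ X l)

def liftRun (e : ℕ → Set X × X) : ℕ → Set Y × Y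
  | 0 => liftMove σ X (e 0) []
  | n + 1 => liftMove σ X (e (n + 1)) (liftPos σ X (strongChoquetHist e n))

lemma strongChoquetHist_liftRun (e : ℕ → Set X × X) (n : ℕ) :
    strongChoquetHist (liftRun σ X e) n = liftPos σ X (strongChoquetHist e n) := by
  induction n with
  | zero => rfl
  | succ n ih => rw [strongChoquetHist, ih]; rfl

lemma liftMove_fst_subset (p : Set X × X) (l : List (Set Y × Y)) :
    (liftMove σ X p l).1 ⊆ maxOpenExtension X p.1 := by
  cases l
  · exact subset_rfl
  · exact inter_subset_left

lemma liftMove_snd (p : Set X × X) (l : List (Set Y × Y)) : (liftMove σ X p l).2 = p.2 := by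
  cases l <;> rfl

lemma liftRun_fst_subset (e : ℕ → Set X × X) (n : ℕ) :
    (liftRun σ X e n).1 ⊆ maxOpenExtension X (e n).1 := by
  cases n <;> apply liftMove_fst_subset

variable {σ X}

lemma strongChoquetPos_liftPos (hσ : IsLegalStrongChoquetStrategy σ) {l : List (Set X × X)}
    (h : StrongChoquetPos (subtypeStrategy σ X) l) : StrongChoquetPos σ (liftPos σ X l) := by
  induction h with
  | single U x hU hx =>
    exact .single _ _ (isOpen_maxOpenExtension X U) (mem_maxOpenExtension hU hx)
  | cons U x l hl hU hx hxσ ih =>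
    cases l with
    | nil => cases hl
    | cons q l =>
      exact .cons _ _ _ ih ((isOpen_maxOpenExtension X U).inter (hσ _ ih).1)
        ⟨mem_maxOpenExtension hU hx, hxσ hx⟩ inter_subset_right

lemma isLegalStrongChoquetStrategy_subtypeStrategy (hσ : IsLegalStrongChoquetStrategy σ) :
    IsLegalStrongChoquetStrategy (subtypeStrategy σ X) := by
  intro l hl
  have hlift := hσ _ (strongChoquetPos_liftPos hσ hl)
  refine ⟨hlift.1.preimage continuous_subtype_val, ?_⟩
  cases l with
  | nil => simp
  | cons p l =>
    rintro _ ⟨⟩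
    have hmove := hlift.2 _ rfl
    rw [liftMove_snd] at hmove
    exact ⟨hmove.1, fun z hz => preimage_val_maxOpenExtension_subset X p.1
      (liftMove_fst_subset σ X p _ (hmove.2 hz))⟩

lemma isWinningStrongChoquetStrategy_subtypeStrategy (hσ : IsWinningStrongChoquetStrategy σ)
    (hX : IsGδDense X) : IsWinningStrongChoquetStrategy (subtypeStrategy σ X) := by
  refine ⟨isLegalStrongChoquetStrategy_subtypeStrategy hσ.1, fun e he => ?_⟩
  have hpos : ∀ n, StrongChoquetPos σ (strongChoquetHist (liftRun σ X e) n) := fun n => by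
    rw [strongChoquetHist_liftRun]
    exact strongChoquetPos_liftPos hσ.1 (he n)
  obtain ⟨y, hy⟩ := hσ.2 _ hpos
  obtain ⟨z, hzX, hz⟩ :=
    hX _ (.iInter_of_isOpen (isOpen_fst_of_forall_strongChoquetPos hpos)) ⟨y, hy⟩
  exact ⟨⟨z, hzX⟩, mem_iInter.2 fun n =>
    preimage_val_maxOpenExtension_subset X _ (liftRun_fst_subset σ X e n (mem_iInter.1 hz n))⟩

end Game

/-- Let `Y` be a strong Choquet topological space and let `X ⊆ Y` be a
`Gδ`-dense subset of `Y`.  Then `X`, with the subspace topology, is strong Choquet. -/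
theorem statement_10 {Y : Type*} [TopologicalSpace Y] (hY : IsStrongChoquet Y)
    (X : Set Y) (hX : IsGδDense X) : IsStrongChoquet ↥X := by
  obtain ⟨σ, hσ⟩ := hY
  exact ⟨_, isWinningStrongChoquetStrategy_subtypeStrategy hσ hX⟩
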